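/- With the data of the mean-field operator setup (finite type set Φ, matrices H(φ), G(φ), Q(φ) with ‖H(φ)‖ < 1 for all φ, probability weights P, initial means ν(φ)), suppose ζ := ∑_{φ∈Φ} (‖Q(φ)‖ ‖G(φ)‖ / (1 - ‖H(φ)‖)²) P(φ) < 1. Then there exists a unique bounded sequence X̄* : ℕ → ℝⁿ such that T(X̄*) = X̄*, i.e., X̄*_k = ∑_{φ∈Φ} X̂_k(φ; X̄*) P(φ) for all k ∈ ℕ. -/

import Mathlib

/-!
`T` is affine in `X̄`, and its linear part is bounded on `ℓ^∞` by `ζ`: for each type `φ` the inner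
series is dominated by the geometric series in `‖Hᵀ‖ = ‖H‖`, and so is the finite convolution
with the powers of `H`, which produces the factor `(1 - ‖H‖)⁻²`. Hence for `ζ < 1` the operator
`T` is a contraction of the Banach space of bounded sequences, and the Banach fixed point theorem
gives existence and uniqueness of the bounded fixed point.
-/

/-- The aggregate trajectory of agents of type `φ`:
`X̂_k(φ; X̄) = H(φ)^k ν(φ) + ∑_{j=0}^{k-1} H(φ)^{k-1-j} G(φ) ∑_{s=j+1}^∞ (H(φ)ᵀ)^{s-j-1} Q(φ) X̄_s`
(the inner series reindexed via `s = j + 1 + m`). Matrices are modeled as continuous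
linear maps on Euclidean space; transpose is the adjoint. -/
noncomputable def XhatMF {n : ℕ} {Φ : Type*}
    (H G Q : Φ → (EuclideanSpace ℝ (Fin n) →L[ℝ] EuclideanSpace ℝ (Fin n)))
    (ν : Φ → EuclideanSpace ℝ (Fin n)) (X : ℕ → EuclideanSpace ℝ (Fin n))
    (φ : Φ) (k : ℕ) : EuclideanSpace ℝ (Fin n) :=
  ((H φ) ^ k) (ν φ) +
    ∑ j ∈ Finset.range k, ((H φ) ^ (k - 1 - j))
      ((G φ) (∑' m : ℕ, ((ContinuousLinearMap.adjoint (H φ)) ^ m) ((Q φ) (X (j + 1 + m)))))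

/-- The mean-field consistency operator `T(X̄)(k) = ∑_{φ ∈ Φ} X̂_k(φ; X̄) P(φ)`. -/
noncomputable def TMF {n : ℕ} {Φ : Type*} [Fintype Φ]
    (H G Q : Φ → (EuclideanSpace ℝ (Fin n) →L[ℝ] EuclideanSpace ℝ (Fin n)))
    (P : Φ → ℝ) (ν : Φ → EuclideanSpace ℝ (Fin n)) (X : ℕ → EuclideanSpace ℝ (Fin n))
    (k : ℕ) : EuclideanSpace ℝ (Fin n) :=
  ∑ φ, P φ • XhatMF H G Q ν X φ k

open Finset

namespace ContinuousLinearMap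

variable {𝕜 E : Type*} [NontriviallyNormedField 𝕜] [NormedAddCommGroup E] [NormedSpace 𝕜 E]

theorem norm_pow_apply_le (A : E →L[𝕜] E) (m : ℕ) (x : E) : ‖(A ^ m) x‖ ≤ ‖A‖ ^ m * ‖x‖ := by
  induction m generalizing x with
  | zero => simp
  | succ m ih =>
    calc ‖(A ^ (m + 1)) x‖ = ‖(A ^ m) (A x)‖ := by rw [pow_succ]; rfl
      _ ≤ ‖A‖ ^ m * (‖A‖ * ‖x‖) := (ih (A x)).trans (by gcongr; exact A.le_opNorm x)
      _ = ‖A‖ ^ (m + 1) * ‖x‖ := by ring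

theorem norm_tsum_pow_apply_le {A : E →L[𝕜] E} (hA : ‖A‖ < 1) {y : ℕ → E} {C : ℝ}
    (hy : ∀ m, ‖y m‖ ≤ C) : ‖∑' m, (A ^ m) (y m)‖ ≤ (1 - ‖A‖)⁻¹ * C :=
  tsum_of_norm_bounded ((hasSum_geometric_of_lt_one (norm_nonneg A) hA).mul_right C)
    fun m => (A.norm_pow_apply_le m (y m)).trans (by gcongr; exact hy m)

theorem summable_pow_apply [CompleteSpace E] {A : E →L[𝕜] E} (hA : ‖A‖ < 1) {y : ℕ → E} {C : ℝ}
    (hy : ∀ m, ‖y m‖ ≤ C) : Summable fun m => (A ^ m) (y m) :=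
  .of_norm_bounded ((summable_geometric_of_lt_one (norm_nonneg A) hA).mul_right C)
    fun m => (A.norm_pow_apply_le m (y m)).trans (by gcongr; exact hy m)

theorem norm_sum_range_pow_apply_le {A : E →L[𝕜] E} (hA : ‖A‖ < 1) {y : ℕ → E} {C : ℝ}
    (hy : ∀ j, ‖y j‖ ≤ C) (k : ℕ) :
    ‖∑ j ∈ range k, (A ^ (k - 1 - j)) (y j)‖ ≤ (1 - ‖A‖)⁻¹ * C := by
  have hC : 0 ≤ C := (norm_nonneg _).trans (hy 0)
  calc ‖∑ j ∈ range k, (A ^ (k - 1 - j)) (y j)‖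
      ≤ ∑ j ∈ range k, ‖A‖ ^ (k - 1 - j) * C :=
        norm_sum_le_of_le _ fun j _ => (A.norm_pow_apply_le _ _).trans (by gcongr; exact hy j)
    _ = (∑ j ∈ range k, ‖A‖ ^ j) * C := by rw [← sum_mul, sum_range_reflect (‖A‖ ^ ·) k]
    _ ≤ (1 - ‖A‖)⁻¹ * C := by
        gcongr
        exact sum_le_hasSum _ (fun j _ => by positivity)
          (hasSum_geometric_of_lt_one (norm_nonneg A) hA)

end ContinuousLinearMap

theorem existsUnique_bounded_isFixedPt {α E : Type*} [NormedAddCommGroup E] [CompleteSpace E]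
    (F : (α → E) → α → E) {K : ℝ} (hK0 : 0 ≤ K) (hK : K < 1)
    (hF_bdd : ∀ X : α → E, (∃ C, ∀ k, ‖X k‖ ≤ C) → ∃ C, ∀ k, ‖F X k‖ ≤ C)
    (hF_lip : ∀ (X Y : α → E) (D : ℝ), (∃ C, ∀ k, ‖X k‖ ≤ C) → (∃ C, ∀ k, ‖Y k‖ ≤ C) →
      (∀ k, ‖X k - Y k‖ ≤ D) → ∀ k, ‖F X k - F Y k‖ ≤ K * D) :
    ∃! X : α → E, (∃ C, ∀ k, ‖X k‖ ≤ C) ∧ ∀ k, F X k = X k := by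
  have memℓp_of_bdd {X : α → E} (hX : ∃ C, ∀ k, ‖X k‖ ≤ C) : Memℓp X ⊤ := by
    obtain ⟨C, hC⟩ := hX
    exact memℓp_infty_iff.2 ⟨C, Set.forall_mem_range.2 hC⟩
  have bdd_of_lp (f : lp (fun _ : α => E) ⊤) : ∃ C, ∀ k, ‖f k‖ ≤ C :=
    ⟨‖f‖, lp.norm_apply_le_norm ENNReal.top_ne_zero f⟩
  let T : lp (fun _ : α => E) ⊤ → lp (fun _ : α => E) ⊤ :=
    fun f => ⟨F f, memℓp_of_bdd (hF_bdd f (bdd_of_lp f))⟩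
  have hT : ContractingWith ⟨K, hK0⟩ T := by
    refine ⟨hK, .of_dist_le_mul fun f g => ?_⟩
    rw [dist_eq_norm, dist_eq_norm]
    refine lp.norm_le_of_forall_le (by positivity) fun k => ?_
    exact hF_lip f g _ (bdd_of_lp f) (bdd_of_lp g)
      (fun k => lp.norm_apply_le_norm ENNReal.top_ne_zero (f - g) k) k
  refine ⟨(ContractingWith.fixedPoint T hT : lp (fun _ : α => E) ⊤), ⟨bdd_of_lp _,
    congrFun (congrArg Subtype.val hT.fixedPoint_isFixedPt)⟩, fun Y ⟨hY, hFY⟩ => ?_⟩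
  have hYfix : Function.IsFixedPt T ⟨Y, memℓp_of_bdd hY⟩ := Subtype.ext (funext hFY)
  exact congrArg Subtype.val (hT.fixedPoint_unique hYfix)

section MeanField

variable {n : ℕ} {Φ : Type*} {H G Q : Φ → (EuclideanSpace ℝ (Fin n) →L[ℝ] EuclideanSpace ℝ (Fin n))}
  {ν : Φ → EuclideanSpace ℝ (Fin n)} {X Y : ℕ → EuclideanSpace ℝ (Fin n)} {C : ℝ}

theorem norm_XhatMF_le {φ : Φ} (hH : ‖H φ‖ < 1) (hX : ∀ k, ‖X k‖ ≤ C) (k : ℕ) :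
    ‖XhatMF H G Q ν X φ k‖ ≤ ‖ν φ‖ + ‖Q φ‖ * ‖G φ‖ / (1 - ‖H φ‖) ^ 2 * C := by
  have hr : 0 < 1 - ‖H φ‖ := sub_pos.2 hH
  have hQX (j : ℕ) (m : ℕ) : ‖Q φ (X (j + 1 + m))‖ ≤ ‖Q φ‖ * C :=
    (Q φ).le_opNorm_of_le (hX _)
  have hH' : ‖ContinuousLinearMap.adjoint (H φ)‖ < 1 :=
    (ContinuousLinearMap.adjoint.norm_map _).trans_lt hH
  have hinner (j : ℕ) : ‖G φ (∑' m, (ContinuousLinearMap.adjoint (H φ) ^ m) (Q φ (X (j + 1 + m))))‖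
      ≤ ‖G φ‖ * ((1 - ‖H φ‖)⁻¹ * (‖Q φ‖ * C)) := by
    refine (G φ).le_opNorm_of_le ?_
    simpa only [ContinuousLinearMap.adjoint.norm_map] using
      ContinuousLinearMap.norm_tsum_pow_apply_le hH' (hQX j)
  calc ‖XhatMF H G Q ν X φ k‖
      ≤ ‖H φ‖ ^ k * ‖ν φ‖ + (1 - ‖H φ‖)⁻¹ * (‖G φ‖ * ((1 - ‖H φ‖)⁻¹ * (‖Q φ‖ * C))) :=
        (norm_add_le _ _).trans (add_le_add ((H φ).norm_pow_apply_le k (ν φ))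
          ((H φ).norm_sum_range_pow_apply_le hH hinner k))
    _ ≤ 1 * ‖ν φ‖ + (1 - ‖H φ‖)⁻¹ * (‖G φ‖ * ((1 - ‖H φ‖)⁻¹ * (‖Q φ‖ * C))) := by
        gcongr
        exact pow_le_one₀ (norm_nonneg _) hH.le
    _ = ‖ν φ‖ + ‖Q φ‖ * ‖G φ‖ / (1 - ‖H φ‖) ^ 2 * C := by field_simp

theorem XhatMF_sub {φ : Φ} (hH : ‖H φ‖ < 1) (hX : ∃ C, ∀ k, ‖X k‖ ≤ C)
    (hY : ∃ C, ∀ k, ‖Y k‖ ≤ C) (k : ℕ) :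
    XhatMF H G Q ν X φ k - XhatMF H G Q ν Y φ k = XhatMF H G Q 0 (X - Y) φ k := by
  obtain ⟨CX, hX⟩ := hX
  obtain ⟨CY, hY⟩ := hY
  have hH' : ‖ContinuousLinearMap.adjoint (H φ)‖ < 1 :=
    (ContinuousLinearMap.adjoint.norm_map _).trans_lt hH
  have hsum {Z : ℕ → EuclideanSpace ℝ (Fin n)} {C : ℝ} (hZ : ∀ k, ‖Z k‖ ≤ C) (j : ℕ) :
      Summable fun m => (ContinuousLinearMap.adjoint (H φ) ^ m) (Q φ (Z (j + 1 + m))) :=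
    ContinuousLinearMap.summable_pow_apply hH' fun m => (Q φ).le_opNorm_of_le (hZ _)
  -- `tsum` only splits over a difference of summable series: this is where boundedness enters.
  simp only [XhatMF, Pi.zero_apply, map_zero, zero_add, add_sub_add_left_eq_sub,
    ← sum_sub_distrib, ← map_sub, Pi.sub_apply]
  refine sum_congr rfl fun j _ => ?_
  rw [← (hsum hX j).tsum_sub (hsum hY j)]
  simp only [map_sub]

variable [Fintype Φ] {P : Φ → ℝ}

theorem TMF_sub (hH : ∀ φ, ‖H φ‖ < 1) (hX : ∃ C, ∀ k, ‖X k‖ ≤ C)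
    (hY : ∃ C, ∀ k, ‖Y k‖ ≤ C) (k : ℕ) :
    TMF H G Q P ν X k - TMF H G Q P ν Y k = TMF H G Q P 0 (X - Y) k := by
  simp only [TMF, ← sum_sub_distrib, ← smul_sub, XhatMF_sub (hH _) hX hY]

theorem norm_TMF_le (hH : ∀ φ, ‖H φ‖ < 1) (hP : ∀ φ, 0 ≤ P φ) (hX : ∀ k, ‖X k‖ ≤ C) (k : ℕ) :
    ‖TMF H G Q P ν X k‖
      ≤ ∑ φ, P φ * ‖ν φ‖ + (∑ φ, ‖Q φ‖ * ‖G φ‖ / (1 - ‖H φ‖) ^ 2 * P φ) * C := by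
  calc ‖TMF H G Q P ν X k‖
      ≤ ∑ φ, P φ * (‖ν φ‖ + ‖Q φ‖ * ‖G φ‖ / (1 - ‖H φ‖) ^ 2 * C) := by
        refine norm_sum_le_of_le _ fun φ _ => ?_
        rw [norm_smul, Real.norm_of_nonneg (hP φ)]
        exact mul_le_mul_of_nonneg_left (norm_XhatMF_le (hH φ) hX k) (hP φ)
    _ = _ := by
        rw [sum_mul, ← sum_add_distrib]
        exact sum_congr rfl fun φ _ => by ring

end MeanField

theorem stmt6_general {n : ℕ} {Φ : Type*} [Fintype Φ]
    (H G Q : Φ → (EuclideanSpace ℝ (Fin n) →L[ℝ] EuclideanSpace ℝ (Fin n)))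
    (hH : ∀ φ, ‖H φ‖ < 1)
    (P : Φ → ℝ) (hP : ∀ φ, 0 ≤ P φ)
    (ν : Φ → EuclideanSpace ℝ (Fin n))
    (hζ : ∑ φ, ‖Q φ‖ * ‖G φ‖ / (1 - ‖H φ‖) ^ 2 * P φ < 1) :
    ∃! X : ℕ → EuclideanSpace ℝ (Fin n),
      (∃ C : ℝ, ∀ k, ‖X k‖ ≤ C) ∧ ∀ k, TMF H G Q P ν X k = X k := by
  have hζ0 : 0 ≤ ∑ φ, ‖Q φ‖ * ‖G φ‖ / (1 - ‖H φ‖) ^ 2 * P φ :=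
    sum_nonneg fun φ _ => mul_nonneg (by positivity) (hP φ)
  refine existsUnique_bounded_isFixedPt (TMF H G Q P ν) hζ0 hζ
    (fun X ⟨C, hC⟩ => ⟨_, norm_TMF_le hH hP hC⟩) fun X Y D hX hY hD k => ?_
  rw [TMF_sub hH hX hY]
  simpa only [Pi.zero_apply, norm_zero, mul_zero, sum_const_zero, zero_add] using
    norm_TMF_le (ν := 0) (X := X - Y) hH hP hD k

/-- In the mean-field operator setup, if
`ζ = ∑_φ (‖Q(φ)‖‖G(φ)‖/(1-‖H(φ)‖)²) P(φ) < 1`, then there is a unique bounded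
sequence `X̄* : ℕ → ℝⁿ` with `T(X̄*) = X̄*`, i.e. `X̄*_k = ∑_φ X̂_k(φ; X̄*) P(φ)`
for all `k`. -/
theorem stmt6 {n : ℕ} {Φ : Type*} [Fintype Φ] [Nonempty Φ]
    (H G Q : Φ → (EuclideanSpace ℝ (Fin n) →L[ℝ] EuclideanSpace ℝ (Fin n)))
    (hH : ∀ φ, ‖H φ‖ < 1)
    (P : Φ → ℝ) (hP : ∀ φ, 0 ≤ P φ) (hPsum : ∑ φ, P φ = 1)
    (ν : Φ → EuclideanSpace ℝ (Fin n))
    (hζ : ∑ φ, ‖Q φ‖ * ‖G φ‖ / (1 - ‖H φ‖) ^ 2 * P φ < 1) :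
    ∃! X : ℕ → EuclideanSpace ℝ (Fin n),
      (∃ C : ℝ, ∀ k, ‖X k‖ ≤ C) ∧ ∀ k, TMF H G Q P ν X k = X k :=
  stmt6_general H G Q hH P hP ν hζ
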